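/- Let G be a topological group, P a Hausdorff topological space, E and F real normed spaces, U ⊆ G open, V ⊆ E open, f : U × P → E a C^{1,0}-map with f(U × P) ⊆ V, and g : V → F a map which is continuously differentiable on V (i.e. g is Fréchet differentiable at every point of V and its derivative Dg : V → L(E,F) is continuous). Then g ∘ f : U × P → F is C^{1,0}, and d^{(1,0)}(g ∘ f)(x,p,γ) = Dg(f(x,p))(d^{(1,0)}f(x,p,γ)) for all x ∈ U, p ∈ P, γ ∈ 𝔏(G). -/

import Mathlib

open Filter Topology Set

/-- The set of continuous one-parameter subgroups `γ : (ℝ,+) → G`, as a subtype of `C(ℝ, G)`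
(hence endowed with the compact-open topology). -/
abbrev OneParam (G : Type*) [TopologicalSpace G] [Group G] : Type _ :=
  {γ : C(ℝ, G) // ∀ s t : ℝ, γ (s + t) = γ s * γ t}

/-- `D_γ f(x) = v`, i.e. `(1/t)(f(x·γ(t)) − f(x)) → v` as `t → 0`. -/
def HasDirDeriv {G E : Type*} [TopologicalSpace G] [Group G]
    [AddCommGroup E] [Module ℝ E] [TopologicalSpace E]
    (f : G → E) (x : G) (γ : OneParam G) (v : E) : Prop :=
  Tendsto (fun t : ℝ => t⁻¹ • (f (x * γ.1 t) - f x)) (𝓝[≠] (0 : ℝ)) (𝓝 v)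

/-!
The directional derivative `D_γ f(x)` is the ordinary derivative at `0` of the curve
`t ↦ f(x·γ(t))`, because `γ(0) = 1`. Hence the value of `D_γ (g ∘ f)` is given by the
one-variable chain rule, and its continuity by the continuity of evaluation
`L(E,F) × E → F` applied to `(Dg ∘ f, d^{(1,0)}f)`.
-/

namespace OneParam

variable {G : Type*} [TopologicalSpace G] [Group G]

theorem apply_zero (γ : OneParam G) : γ.1 0 = 1 := by
  simpa using γ.2 0 0

end OneParam

section HasDirDeriv

variable {G E F : Type*} [TopologicalSpace G] [Group G]
  [NormedAddCommGroup E] [NormedSpace ℝ E] [NormedAddCommGroup F] [NormedSpace ℝ F]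

theorem hasDirDeriv_iff_hasDerivAt {f : G → E} {x : G} {γ : OneParam G} {v : E} :
    HasDirDeriv f x γ v ↔ HasDerivAt (fun t => f (x * γ.1 t)) v 0 := by
  rw [hasDerivAt_iff_tendsto_slope, HasDirDeriv]
  refine tendsto_congr fun t => ?_
  simp [slope, OneParam.apply_zero]

theorem HasFDerivAt.comp_hasDirDeriv {g : E → F} {g' : E →L[ℝ] F} {f : G → E} {x : G}
    {γ : OneParam G} {v : E} (hg : HasFDerivAt g g' (f x)) (hf : HasDirDeriv f x γ v) :
    HasDirDeriv (fun y => g (f y)) x γ (g' v) := by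
  rw [hasDirDeriv_iff_hasDerivAt] at hf ⊢
  refine HasFDerivAt.comp_hasDerivAt (f := fun t => f (x * γ.1 t)) 0 ?_ hf
  simpa [OneParam.apply_zero] using hg

end HasDirDeriv

theorem comp_frechet_isC10_general
    {G P E F : Type*} [Group G] [TopologicalSpace G]
    [TopologicalSpace P]
    [NormedAddCommGroup E] [NormedSpace ℝ E] [NormedAddCommGroup F] [NormedSpace ℝ F]
    (U : Set G) (V : Set E)
    (f : G → P → E) (d10 : G → P → OneParam G → E)
    (hfV : ∀ x ∈ U, ∀ p : P, f x p ∈ V)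
    (hf : ContinuousOn (fun q : G × P => f q.1 q.2) (U ×ˢ (univ : Set P)))
    (hd : ∀ x ∈ U, ∀ (p : P) (γ : OneParam G),
      HasDirDeriv (fun x' => f x' p) x γ (d10 x p γ))
    (hdc : ContinuousOn (fun q : G × P × OneParam G => d10 q.1 q.2.1 q.2.2)
      (U ×ˢ (univ : Set (P × OneParam G))))
    (g : E → F) (Dg : E → E →L[ℝ] F)
    (hg : ∀ e ∈ V, HasFDerivAt g (Dg e) e) (hDg : ContinuousOn Dg V) :
    ContinuousOn (fun q : G × P => g (f q.1 q.2)) (U ×ˢ (univ : Set P)) ∧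
    (∀ x ∈ U, ∀ (p : P) (γ : OneParam G),
      HasDirDeriv (fun x' => g (f x' p)) x γ (Dg (f x p) (d10 x p γ))) ∧
    ContinuousOn (fun q : G × P × OneParam G => Dg (f q.1 q.2.1) (d10 q.1 q.2.1 q.2.2))
      (U ×ˢ (univ : Set (P × OneParam G))) := by
  have hfUV : MapsTo (fun q : G × P => f q.1 q.2) (U ×ˢ univ) V :=
    fun q hq => hfV q.1 hq.1 q.2
  have hgV : ContinuousOn g V := fun e he => (hg e he).continuousAt.continuousWithinAt
  have hf' : ContinuousOn (fun q : G × P × OneParam G => f q.1 q.2.1) (U ×ˢ univ) :=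
    hf.comp (f := fun q : G × P × OneParam G => (q.1, q.2.1)) (by fun_prop)
      fun q hq => ⟨hq.1, mem_univ _⟩
  refine ⟨hgV.comp hf hfUV, fun x hx p γ => ?_, ?_⟩
  · exact (hg _ (hfV x hx p)).comp_hasDirDeriv (f := fun y => f y p) (hd x hx p γ)
  · exact (hDg.comp hf' fun q hq => hfV q.1 hq.1 q.2.1).clm_apply hdc

/-- Let `f : U × P → E` be `C^{1,0}` (with `P` a Hausdorff space,
partial derivative map `d10`) with `f(U × P) ⊆ V`, and let `g : V → F` be continuously
(Fréchet) differentiable on the open set `V ⊆ E` with derivative `Dg`. Then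
`g ∘ f : U × P → F` is `C^{1,0}`, with
`d^{(1,0)}(g ∘ f)(x,p,γ) = Dg(f(x,p))(d^{(1,0)}f(x,p,γ))`. -/
theorem comp_frechet_isC10
    {G P E F : Type*} [Group G] [TopologicalSpace G] [IsTopologicalGroup G]
    [TopologicalSpace P] [T2Space P]
    [NormedAddCommGroup E] [NormedSpace ℝ E] [NormedAddCommGroup F] [NormedSpace ℝ F]
    (U : Set G) (hU : IsOpen U) (V : Set E) (hV : IsOpen V)
    (f : G → P → E) (d10 : G → P → OneParam G → E)
    (hfV : ∀ x ∈ U, ∀ p : P, f x p ∈ V)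
    (hf : ContinuousOn (fun q : G × P => f q.1 q.2) (U ×ˢ (univ : Set P)))
    (hd : ∀ x ∈ U, ∀ (p : P) (γ : OneParam G),
      HasDirDeriv (fun x' => f x' p) x γ (d10 x p γ))
    (hdc : ContinuousOn (fun q : G × P × OneParam G => d10 q.1 q.2.1 q.2.2)
      (U ×ˢ (univ : Set (P × OneParam G))))
    (g : E → F) (Dg : E → E →L[ℝ] F)
    (hg : ∀ e ∈ V, HasFDerivAt g (Dg e) e) (hDg : ContinuousOn Dg V) :
    ContinuousOn (fun q : G × P => g (f q.1 q.2)) (U ×ˢ (univ : Set P)) ∧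
    (∀ x ∈ U, ∀ (p : P) (γ : OneParam G),
      HasDirDeriv (fun x' => g (f x' p)) x γ (Dg (f x p) (d10 x p γ))) ∧
    ContinuousOn (fun q : G × P × OneParam G => Dg (f q.1 q.2.1) (d10 q.1 q.2.1 q.2.2))
      (U ×ˢ (univ : Set (P × OneParam G))) :=
  comp_frechet_isC10_general U V f d10 hfV hf hd hdc g Dg hg hDg
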